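/- arXiv:1711.07603 — 5 statements merged into one kernel-verified Lean document; each statement's English description precedes it below -/
import Mathlib

section
/- For any positive integers p, q, a, b with gcd(p,q)=1, the lattice tetrahedron T_{p,q}(a,b) = conv{(0,0,0),(a,0,0),(0,0,1),(bp,bq,1)} contains exactly a+b+2 lattice points, namely the points (i,0,0) for 0 ≤ i ≤ a and the points (jp,jq,1) for 0 ≤ j ≤ b. -/
/-- embedding of integer points into `ℝ³` -/
noncomputable def rr (v : Fin 3 → ℤ) : Fin 3 → ℝ := fun i => (v i : ℝ)

/-- the tetrahedron `T_{p,q}(a,b)` -/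
noncomputable def Tpq (p q a b : ℤ) : Set (Fin 3 → ℝ) :=
  convexHull ℝ {rr ![0,0,0], rr ![a,0,0], rr ![0,0,1], rr ![b*p, b*q, 1]}

lemma memT (p q a b : ℤ) (x : Fin 3 → ℝ) :
    x ∈ Tpq p q a b ↔ ∃ s t u : ℝ, 0 ≤ s ∧ s ≤ 1 ∧ 0 ≤ t ∧ t ≤ 1 ∧ 0 ≤ u ∧ u ≤ 1 ∧
      x 0 = (1-u)*s*a + u*t*(b*p) ∧ x 1 = u*t*(b*q) ∧ x 2 = u := by
  have h1 : ({rr ![0,0,0], rr ![a,0,0], rr ![0,0,1], rr ![b*p, b*q, 1]} : Set (Fin 3 → ℝ))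
      = {rr ![0,0,0], rr ![a,0,0]} ∪ {rr ![0,0,1], rr ![b*p, b*q, 1]} := by
    rw [Set.insert_union, Set.singleton_union]
  rw [Tpq, h1, convexHull_union (by simp) (by simp), convexHull_pair, convexHull_pair]
  rw [mem_convexJoin]
  constructor
  · rintro ⟨P, ⟨c1, c2, hc1, hc2, hc, hP⟩, Q, ⟨d1, d2, hd1, hd2, hd, hQ⟩, e1, e2, he1, he2, he, hx⟩
    have h0 := congrFun hx 0
    have h1 := congrFun hx 1
    have h2 := congrFun hx 2
    subst hP hQ
    simp [rr] at h0 h1 h2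
    refine ⟨c2, d2, e2, hc2, by linarith, hd2, by linarith, he2, by linarith, ?_, ?_, ?_⟩
    · linear_combination (-1 : ℝ) * h0 + c2 * (a:ℝ) * he
    · linear_combination (-1 : ℝ) * h1
    · linear_combination (-1 : ℝ) * h2 + e2 * hd
  · rintro ⟨s, t, u, hs0, hs1, ht0, ht1, hu0, hu1, h0, h1, h2⟩
    refine ⟨(1-s) • rr ![0,0,0] + s • rr ![a,0,0], ⟨1-s, s, by linarith, hs0, by ring, rfl⟩,
      (1-t) • rr ![0,0,1] + t • rr ![b*p, b*q, 1], ⟨1-t, t, by linarith, ht0, by ring, rfl⟩,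
      1-u, u, by linarith, hu0, by ring, ?_⟩
    funext i
    fin_cases i <;> simp [rr]
    · rw [show x 0 = (1-u)*s*a + u*t*(b*p) from h0]; push_cast; ring
    · rw [show x 1 = u*t*(b*q) from h1]; push_cast; ring
    · rw [show x 2 = u from h2]; ring

lemma seteq (p q a b : ℤ) (hp : 0 < p) (hq : 0 < q) (ha : 0 < a) (hb : 0 < b)
    (hpq : Int.gcd p q = 1) :
    {v : Fin 3 → ℤ | rr v ∈ Tpq p q a b} =
      ({v | ∃ i : ℤ, 0 ≤ i ∧ i ≤ a ∧ v = ![i, 0, 0]} ∪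
       {v | ∃ j : ℤ, 0 ≤ j ∧ j ≤ b ∧ v = ![j*p, j*q, 1]}) := by
  have ha' : (0:ℝ) < a := by exact_mod_cast ha
  have hb' : (0:ℝ) < b := by exact_mod_cast hb
  ext v
  simp only [Set.mem_setOf_eq, Set.mem_union, memT]
  constructor
  · rintro ⟨s, t, u, hs0, hs1, ht0, ht1, hu0, hu1, h0, h1, h2⟩
    simp only [rr] at h0 h1 h2
    have hv2 : v 2 = 0 ∨ v 2 = 1 := by
      have l0 : (0:ℝ) ≤ (v 2 : ℝ) := by rw [h2]; exact hu0
      have l1 : (v 2 : ℝ) ≤ 1 := by rw [h2]; exact hu1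
      have : 0 ≤ v 2 := by exact_mod_cast l0
      have : v 2 ≤ 1 := by exact_mod_cast l1
      omega
    rcases hv2 with hv2 | hv2
    · left
      have hu : u = 0 := by rw [← h2, hv2]; simp
      subst hu
      have h1' : (v 1 : ℝ) = 0 := by rw [h1]; ring
      have hv1 : v 1 = 0 := by exact_mod_cast h1'
      have h0' : (v 0 : ℝ) = s * a := by rw [h0]; ring
      refine ⟨v 0, ?_, ?_, ?_⟩
      · have : (0:ℝ) ≤ (v 0 : ℝ) := by rw [h0']; positivity
        exact_mod_cast this
      · have : (v 0 : ℝ) ≤ a := by rw [h0']; nlinarith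
        exact_mod_cast this
      · funext i; fin_cases i <;> simp [hv1, hv2]
    · right
      have hu : u = 1 := by rw [← h2, hv2]; simp
      subst hu
      have h0' : (v 0 : ℝ) = (t * b) * p := by rw [h0]; ring
      have h1' : (v 1 : ℝ) = (t * b) * q := by rw [h1]; ring
      set A := Int.gcdA p q
      set B := Int.gcdB p q
      have hbez : p * A + q * B = 1 := by
        have := Int.gcd_eq_gcd_ab p q
        rw [hpq] at this; push_cast at this; linarith
      set j : ℤ := A * v 0 + B * v 1 with hj
      have hjr : (j : ℝ) = t * b := by
        push_cast [hj]
        rw [h0', h1']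
        have h : ((p : ℝ) * A + q * B) = 1 := by exact_mod_cast hbez
        linear_combination (t * (b:ℝ)) * h
      have hv0 : v 0 = j * p := by
        have : (v 0 : ℝ) = (j : ℝ) * p := by rw [hjr, h0']
        exact_mod_cast this
      have hv1 : v 1 = j * q := by
        have : (v 1 : ℝ) = (j : ℝ) * q := by rw [hjr, h1']
        exact_mod_cast this
      refine ⟨j, ?_, ?_, ?_⟩
      · have : (0:ℝ) ≤ (j:ℝ) := by rw [hjr]; positivity
        exact_mod_cast this
      · have : (j:ℝ) ≤ b := by rw [hjr]; nlinarith
        exact_mod_cast this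
      · funext i; fin_cases i <;> simp [hv0, hv1, hv2]
  · rintro (⟨i, hi0, hi1, rfl⟩ | ⟨j, hj0, hj1, rfl⟩)
    · refine ⟨(i:ℝ)/a, 0, 0, by positivity, ?_, le_refl _, by norm_num, le_refl _, by norm_num,
        ?_, ?_, ?_⟩
      · rw [div_le_one ha']; exact_mod_cast hi1
      · simp [rr]; field_simp
      · simp [rr]
      · simp [rr]
    · refine ⟨0, (j:ℝ)/b, 1, le_refl _, by norm_num, by positivity, ?_, by norm_num, le_refl _,
        ?_, ?_, ?_⟩
      · rw [div_le_one hb']; exact_mod_cast hj1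
      · simp [rr]; push_cast; field_simp
      · simp [rr]; push_cast; field_simp
      · simp [rr]

lemma cardeq (p q a b : ℤ) (hp : 0 < p) (hq : 0 < q) (ha : 0 < a) (hb : 0 < b) :
    (({v | ∃ i : ℤ, 0 ≤ i ∧ i ≤ a ∧ v = ![i, 0, 0]} ∪
       {v | ∃ j : ℤ, 0 ≤ j ∧ j ≤ b ∧ v = ![j*p, j*q, 1]}) : Set (Fin 3 → ℤ)).ncard
      = (a + b + 2).toNat := by
  have hA : {v : Fin 3 → ℤ | ∃ i : ℤ, 0 ≤ i ∧ i ≤ a ∧ v = ![i, 0, 0]}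
      = (fun i : ℤ => ![i, 0, 0]) '' Set.Icc 0 a := by
    ext v; simp [Set.mem_image, Set.mem_Icc, eq_comm, and_assoc]
  have hB : {v : Fin 3 → ℤ | ∃ j : ℤ, 0 ≤ j ∧ j ≤ b ∧ v = ![j*p, j*q, 1]}
      = (fun j : ℤ => ![j*p, j*q, 1]) '' Set.Icc 0 b := by
    ext v; simp [Set.mem_image, Set.mem_Icc, eq_comm, and_assoc]
  rw [hA, hB]
  have finA : ((fun i : ℤ => ![i, 0, 0]) '' Set.Icc 0 a).Finite :=
    (Set.finite_Icc _ _).image _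
  have finB : ((fun j : ℤ => ![j*p, j*q, 1]) '' Set.Icc 0 b).Finite :=
    (Set.finite_Icc _ _).image _
  have hdisj : Disjoint ((fun i : ℤ => ![i, 0, 0]) '' Set.Icc 0 a)
      ((fun j : ℤ => ![j*p, j*q, 1]) '' Set.Icc 0 b) := by
    rw [Set.disjoint_left]
    rintro v ⟨i, _, rfl⟩ ⟨j, _, hj⟩
    have := congrFun hj 2
    simp at this
  have injA : Function.Injective (fun i : ℤ => (![i, 0, 0] : Fin 3 → ℤ)) := by
    intro i j h
    simpa using congrFun h 0
  have injB : Function.Injective (fun j : ℤ => (![j*p, j*q, 1] : Fin 3 → ℤ)) := by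
    intro i j h
    have := congrFun h 0
    simp at this
    rcases this with h' | h'
    · exact h'
    · omega
  rw [Set.ncard_union_eq hdisj finA finB,
    Set.ncard_image_of_injective _ injA, Set.ncard_image_of_injective _ injB]
  rw [← Finset.coe_Icc, ← Finset.coe_Icc, Set.ncard_coe_finset, Set.ncard_coe_finset,
    Int.card_Icc, Int.card_Icc]
  omega

theorem stmt0 (p q a b : ℤ) (hp : 0 < p) (hq : 0 < q) (ha : 0 < a) (hb : 0 < b)
    (hpq : Int.gcd p q = 1) :
    {v : Fin 3 → ℤ | rr v ∈ Tpq p q a b} =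
      ({v | ∃ i : ℤ, 0 ≤ i ∧ i ≤ a ∧ v = ![i, 0, 0]} ∪
       {v | ∃ j : ℤ, 0 ≤ j ∧ j ≤ b ∧ v = ![j*p, j*q, 1]}) ∧
    {v : Fin 3 → ℤ | rr v ∈ Tpq p q a b}.ncard = (a + b + 2).toNat := by
  have h := seteq p q a b hp hq ha hb hpq
  exact ⟨h, by rw [h]; exact cardeq p q a b hp hq ha hb⟩
end

section
/- For positive integers p, q, a, b with gcd(p,q)=1, the sublattice index of T_{p,q}(a,b) = conv{(0,0,0),(a,0,0),(0,0,1),(bp,bq,1)} equals q; that is, the affine lattice generated by the lattice points of T_{p,q}(a,b) is {(x,y,z) ∈ Z^3 : q divides y}, which has index q in Z^3. -/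
/-- The subgroup generated by all differences of points of `A`; since `(0,0,0)` is
a point of `T_{p,q}(a,b)`, the affine lattice generated by `A` coincides with it. -/
def diffLat (A : Set (Fin 3 → ℤ)) : AddSubgroup (Fin 3 → ℤ) :=
  AddSubgroup.closure {v | ∃ x ∈ A, ∃ y ∈ A, v = x - y}

/-- The sublattice `{(x,y,z) ∈ ℤ³ : q ∣ y}`. -/
def divY (q : ℤ) : AddSubgroup (Fin 3 → ℤ) where
  carrier := {v | q ∣ v 1}
  zero_mem' := dvd_zero q
  add_mem' := fun ha hb => dvd_add ha hb
  neg_mem' := fun ha => dvd_neg.2 ha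

/-- The set of lattice points of `T_{p,q}(a,b)`. -/
def TpqPts (p q a b : ℤ) : Set (Fin 3 → ℤ) :=
  {v | ∃ i : ℤ, 0 ≤ i ∧ i ≤ a ∧ v = ![i, 0, 0]} ∪
  {v | ∃ j : ℤ, 0 ≤ j ∧ j ≤ b ∧ v = ![j*p, j*q, 1]}

theorem stmt2 (p q a b : ℤ) (hp : 0 < p) (hq : 0 < q) (ha : 0 < a) (hb : 0 < b)
    (hpq : Int.gcd p q = 1) :
    diffLat (TpqPts p q a b) = divY q ∧ (divY q).index = q.toNat := by
  constructor
  · apply le_antisymm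
    · rw [diffLat]
      rw [AddSubgroup.closure_le]
      rintro v ⟨x, hx, y, hy, rfl⟩
      have key : ∀ z ∈ TpqPts p q a b, q ∣ z 1 := by
        rintro z (⟨i, _, _, rfl⟩ | ⟨j, _, _, rfl⟩)
        · simp
        · simp [Dvd.intro]
      show q ∣ (x - y) 1
      exact dvd_sub (key x hx) (key y hy)
    · intro v hv
      have hv1 : q ∣ v 1 := hv
      have h0 : (![(0:ℤ),0,0]) ∈ TpqPts p q a b := Or.inl ⟨0, le_refl 0, ha.le, rfl⟩
      have h1 : (![(1:ℤ),0,0]) ∈ TpqPts p q a b := Or.inl ⟨1, by norm_num, ha, rfl⟩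
      have he2 : (![(0:ℤ),0,1]) ∈ TpqPts p q a b :=
        Or.inr ⟨0, le_refl 0, hb.le, by norm_num⟩
      have hpq1 : (![p, q, 1]) ∈ TpqPts p q a b :=
        Or.inr ⟨1, by norm_num, hb, by norm_num⟩
      have mem1 : (![(1:ℤ),0,0]) ∈ diffLat (TpqPts p q a b) :=
        AddSubgroup.subset_closure ⟨_, h1, _, h0, by funext i; fin_cases i <;> simp⟩
      have mem2 : (![(0:ℤ),0,1]) ∈ diffLat (TpqPts p q a b) :=
        AddSubgroup.subset_closure ⟨_, he2, _, h0, by funext i; fin_cases i <;> simp⟩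
      have mem3 : (![p, q, 1] - ![(0:ℤ),0,1]) ∈ diffLat (TpqPts p q a b) :=
        AddSubgroup.subset_closure ⟨_, hpq1, _, he2, rfl⟩
      have memq : (![(0:ℤ), q, 0]) ∈ diffLat (TpqPts p q a b) := by
        have h := AddSubgroup.sub_mem _ mem3
          (AddSubgroup.zsmul_mem _ mem1 p)
        have he : (![p, q, 1] - ![(0:ℤ),0,1]) - p • ![(1:ℤ),0,0] = ![(0:ℤ), q, 0] := by
          funext i; fin_cases i <;> simp
        rwa [he] at h
      have hrep : v = (v 0) • ![(1:ℤ),0,0] + (v 1 / q) • ![(0:ℤ), q, 0]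
          + (v 2) • ![(0:ℤ),0,1] := by
        funext i; fin_cases i <;>
          simp [Int.ediv_mul_cancel hv1]
      rw [hrep]
      exact AddSubgroup.add_mem _
        (AddSubgroup.add_mem _ (AddSubgroup.zsmul_mem _ mem1 _)
          (AddSubgroup.zsmul_mem _ memq _))
        (AddSubgroup.zsmul_mem _ mem2 _)
  · have hqn : ((q.toNat : ℤ)) = q := Int.toNat_of_nonneg hq.le
    let f : (Fin 3 → ℤ) →+ ZMod q.toNat :=
      (Int.castAddHom (ZMod q.toNat)).comp (Pi.evalAddMonoidHom (fun _ => ℤ) 1)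
    have hker : f.ker = divY q := by
      ext v
      simp only [f, AddMonoidHom.mem_ker, AddMonoidHom.comp_apply, Pi.evalAddMonoidHom_apply,
        Int.coe_castAddHom, ZMod.intCast_zmod_eq_zero_iff_dvd, hqn]
      rfl
    have hsurj : Function.Surjective f := by
      intro x
      obtain ⟨k, hk⟩ := ZMod.intCast_surjective x
      exact ⟨![0, k, 0], by simpa [f] using hk⟩
    rw [← hker, AddSubgroup.index_ker, AddMonoidHom.range_eq_top.mpr hsurj]
    rw [Nat.card_congr AddSubgroup.topEquiv.toEquiv, Nat.card_zmod]
end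

section
/- For integers a ≤ 0 < b with (a,b) ≠ (0,1), the polytope F̃_2(a,b) = conv({(0,0,a),(0,0,b),(-1,-1,1),(1,-1,0),(-1,1,0)}) has lattice width strictly greater than one; that is, for every surjective affine functional f: Z^3 → Z, the difference max f(P∩Z^3) − min f(P∩Z^3) is at least 2. -/
/-- The lattice points of `F̃₂(a,b)`. -/
def F2Pts (a b : ℤ) : Set (Fin 3 → ℤ) :=
  {v | ∃ t : ℤ, a ≤ t ∧ t ≤ b ∧ v = ![0, 0, t]} ∪
  {![-1, -1, 1], ![1, -1, 0], ![-1, 1, 0]}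

lemma eval3 (g : (Fin 3 → ℤ) →ₗ[ℤ] ℤ) (x y z : ℤ) :
    g ![x, y, z] = x * g (Pi.single 0 1) + y * g (Pi.single 1 1) + z * g (Pi.single 2 1) := by
  have h : (![x, y, z] : Fin 3 → ℤ)
      = x • Pi.single 0 1 + y • Pi.single 1 1 + z • Pi.single 2 1 := by
    funext i
    fin_cases i <;> simp [Pi.single_apply]
  rw [h, map_add, map_add, map_smul, map_smul, map_smul, smul_eq_mul, smul_eq_mul,
    smul_eq_mul]

lemma memAxis (a b t : ℤ) (h1 : a ≤ t) (h2 : t ≤ b) : (![0,0,t] : Fin 3 → ℤ) ∈ F2Pts a b :=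
  Or.inl ⟨t, h1, h2, rfl⟩

lemma memE1 (a b : ℤ) : (![-1,-1,1] : Fin 3 → ℤ) ∈ F2Pts a b := Or.inr (by left; rfl)
lemma memE2 (a b : ℤ) : (![1,-1,0] : Fin 3 → ℤ) ∈ F2Pts a b := Or.inr (by right; left; rfl)
lemma memE3 (a b : ℤ) : (![-1,1,0] : Fin 3 → ℤ) ∈ F2Pts a b := Or.inr (by right; right; rfl)

/-- For `(a,b) ≠ (0,1)`, the polytope `F̃₂(a,b)` has lattice width `> 1`:
every surjective affine integer functional (linear part `g`, constant `c`)
takes two values at lattice distance at least `2` on its lattice points. -/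
theorem stmt9 (a b : ℤ) (ha : a ≤ 0) (hb : 0 < b) (hab : ¬(a = 0 ∧ b = 1))
    (g : (Fin 3 → ℤ) →ₗ[ℤ] ℤ) (c : ℤ)
    (hsurj : Function.Surjective fun v => g v + c) :
    ∃ u ∈ F2Pts a b, ∃ w ∈ F2Pts a b, (g u + c) - (g w + c) ≥ 2 := by
  set g1 := g (Pi.single 0 1) with hg1
  set g2 := g (Pi.single 1 1) with hg2
  set g3 := g (Pi.single 2 1) with hg3
  have hba : 2 ≤ b - a := by omega
  have hab' : a ≤ b := by omega
  rcases lt_trichotomy g3 0 with h3 | h3 | h3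
  · exact ⟨![0,0,a], memAxis a b a le_rfl hab', ![0,0,b], memAxis a b b hab' le_rfl, by
      rw [eval3, eval3]; nlinarith⟩
  · rcases lt_trichotomy g1 g2 with h12 | h12 | h12
    · exact ⟨![-1,1,0], memE3 a b, ![1,-1,0], memE2 a b, by
        rw [eval3, eval3]; nlinarith⟩
    · -- g1 = g2, g3 = 0; surjectivity forces g1 = ±1
      obtain ⟨v, hv⟩ := hsurj (1 + c)
      have hveq : v = ![v 0, v 1, v 2] := by funext i; fin_cases i <;> rfl
      have hgv : g v = g1 * (v 0 + v 1) := by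
        have h := eval3 g (v 0) (v 1) (v 2)
        rw [← hveq] at h
        rw [h, ← hg1, ← hg2, ← hg3, ← h12, h3]; ring
      have hdvd : g1 ∣ 1 := ⟨v 0 + v 1, by simp only at hv; omega⟩
      rcases Int.isUnit_iff.mp (isUnit_of_dvd_one hdvd) with h | h
      · exact ⟨![1,-1,0], memE2 a b, ![-1,-1,1], memE1 a b, by
          rw [eval3, eval3]; omega⟩
      · exact ⟨![-1,-1,1], memE1 a b, ![1,-1,0], memE2 a b, by
          rw [eval3, eval3]; omega⟩
    · exact ⟨![1,-1,0], memE2 a b, ![-1,1,0], memE3 a b, by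
        rw [eval3, eval3]; nlinarith⟩
  · exact ⟨![0,0,b], memAxis a b b hab' le_rfl, ![0,0,a], memAxis a b a le_rfl hab', by
      rw [eval3, eval3]; nlinarith⟩
end

section
/- The tetrahedron E^1_{(5,1)} = conv{(1,0,0),(0,0,1),(2,7,1),(-1,-2,-1)} contains exactly five lattice points (its four vertices and the origin); the four tetrahedra spanned by the origin together with three of its vertices have normalized volumes 2, 3, 5 and 7; consequently E^1_{(5,1)} is lattice-spanning (sublattice index 1) but contains no unimodular tetrahedron with vertices among its lattice points. -/
/-- Normalized volume of the tetrahedron with vertices `f 0, f 1, f 2, f 3`. -/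
def normVol (f : Fin 4 → (Fin 3 → ℤ)) : ℕ :=
  (Matrix.det (Matrix.of fun i j : Fin 3 => (f i.succ - f 0) j)).natAbs

def u1 : Fin 3 → ℤ := ![1, 0, 0]
def u2 : Fin 3 → ℤ := ![0, 0, 1]
def u3 : Fin 3 → ℤ := ![2, 7, 1]
def u4 : Fin 3 → ℤ := ![-1, -2, -1]

/-- The tetrahedron `E¹_{(5,1)}`. -/
noncomputable def E51 : Set (Fin 3 → ℝ) :=
  convexHull ℝ {rr u1, rr u2, rr u3, rr u4}

/-- Its lattice points. -/
def L51 : Set (Fin 3 → ℤ) := {v | rr v ∈ E51}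

/-!
The lattice points of `E51` are cut out by its four facet inequalities, and a bounded search shows
that only the vertices and the origin satisfy them; the origin is inside, with barycentric
coordinates `(3, 5, 2, 7) / 17`, the volumes of the opposite tetrahedra. So a lattice tetrahedron
in `E51` is degenerate, `E51` itself (volume 17), or the origin with three vertices (volumes
2, 3, 5, 7): never unimodular. Yet the differences with the origin include `u1`, `u2` and
`u1 + 2 u2 + u3 + 3 u4 = e₂`, which generate `ℤ³`.
-/

open Matrix

section HalfSpace

variable {𝕜 ι : Type*} [CommSemiring 𝕜] [PartialOrder 𝕜] [IsOrderedRing 𝕜] [Fintype ι]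

lemma convex_dotProduct_le (n : ι → 𝕜) (d : 𝕜) : Convex 𝕜 {x : ι → 𝕜 | x ⬝ᵥ n ≤ d} :=
  convex_halfSpace_le ⟨fun x y => add_dotProduct x y n, fun c x => smul_dotProduct c x n⟩ d

lemma convexHull_subset_dotProduct_le {s : Set (ι → 𝕜)} {n : ι → 𝕜} {d : 𝕜}
    (h : ∀ x ∈ s, x ⬝ᵥ n ≤ d) : convexHull 𝕜 s ⊆ {x | x ⬝ᵥ n ≤ d} :=
  convexHull_min h (convex_dotProduct_le n d)

end HalfSpace

lemma AddSubgroup.eq_top_of_forall_single_one_mem {ι : Type*} [Fintype ι] [DecidableEq ι]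
    (H : AddSubgroup (ι → ℤ)) (h : ∀ i, Pi.single i 1 ∈ H) : H = ⊤ := by
  refine eq_top_iff.2 fun v _ => ?_
  rw [pi_eq_sum_univ' v]
  exact sum_mem fun i _ => zsmul_mem (h i) (v i)

lemma subset_diffLat {A : Set (Fin 3 → ℤ)} (h0 : 0 ∈ A) : A ⊆ diffLat A :=
  fun u hu => AddSubgroup.subset_closure ⟨u, hu, 0, h0, (sub_zero u).symm⟩

lemma rr_dotProduct (v w : Fin 3 → ℤ) : rr v ⬝ᵥ rr w = ((v ⬝ᵥ w : ℤ) : ℝ) :=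
  ((Int.castRingHom ℝ).map_dotProduct v w).symm

def pts51 : Fin 5 → Fin 3 → ℤ := ![u1, u2, u3, u4, 0]

lemma range_pts51 : Set.range pts51 = {u1, u2, u3, u4, 0} :=
  Set.ext fun v => by
    simp only [pts51, Set.mem_range, Fin.exists_fin_succ, Fin.exists_fin_zero, cons_val_zero,
      cons_val_succ, Set.mem_insert_iff, Set.mem_singleton_iff, eq_comm, or_false]

lemma vertex_mem_L51 {u : Fin 3 → ℤ} (hu : u ∈ ({u1, u2, u3, u4} : Set (Fin 3 → ℤ))) :
    u ∈ L51 := by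
  apply subset_convexHull ℝ
  rcases hu with rfl | rfl | rfl | rfl <;> simp

lemma zero_mem_L51 : (0 : Fin 3 → ℤ) ∈ L51 := by
  have hcenter : (Finset.univ : Finset (Fin 4)).centerMass (![3, 5, 2, 7] : Fin 4 → ℝ)
      (fun k => rr (![u1, u2, u3, u4] k)) = rr 0 := by
    ext i
    fin_cases i <;> norm_num [Finset.centerMass, Fin.sum_univ_succ, rr, u1, u2, u3, u4]
  show rr 0 ∈ E51
  rw [← hcenter]
  refine Finset.univ.centerMass_mem_convexHull (fun k _ => ?_) (by norm_num [Fin.sum_univ_succ])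
    (fun k _ => ?_) <;> fin_cases k <;> simp

lemma dotProduct_le_of_mem_L51 {v : Fin 3 → ℤ} (hv : v ∈ L51) {n : Fin 3 → ℤ} {d : ℤ}
    (h : ∀ u ∈ [u1, u2, u3, u4], u ⬝ᵥ n ≤ d) : v ⬝ᵥ n ≤ d := by
  have hE : E51 ⊆ {x | x ⬝ᵥ rr n ≤ d} := by
    refine convexHull_subset_dotProduct_le ?_
    rintro x (rfl | rfl | rfl | rfl) <;> rw [rr_dotProduct] <;> exact_mod_cast h _ (by simp)
  have := hE hv
  rwa [Set.mem_ofPred_eq, rr_dotProduct, Int.cast_le] at this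

-- These are the facet inequalities of E51; each `d` is the volume of the tetrahedron spanned by
-- the origin and the corresponding facet.
lemma mem_range_pts51_of_facet_ineqs (v : Fin 3 → ℤ)
    (h₁ : v ⬝ᵥ ![-14, 4, 3] ≤ 3) (h₂ : v ⬝ᵥ ![5, 1, -12] ≤ 5)
    (h₃ : v ⬝ᵥ ![2, -3, 2] ≤ 2) (h₄ : v ⬝ᵥ ![7, -2, 7] ≤ 7) :
    v ∈ Set.range pts51 := by
  obtain ⟨a, b, c, rfl⟩ : ∃ a b c : ℤ, v = ![a, b, c] :=
    ⟨v 0, v 1, v 2, by ext i; fin_cases i <;> rfl⟩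
  simp only [dotProduct, Fin.sum_univ_three, cons_val_zero, cons_val_one, cons_val] at h₁ h₂ h₃ h₄
  obtain ⟨ha₁, ha₂⟩ : -1 ≤ a ∧ a ≤ 2 := by omega
  obtain ⟨hb₁, hb₂⟩ : -2 ≤ b ∧ b ≤ 7 := by omega
  obtain ⟨hc₁, hc₂⟩ : -1 ≤ c ∧ c ≤ 1 := by omega
  interval_cases a <;> interval_cases b <;> interval_cases c <;> first | omega | decide

lemma L51_eq_range : L51 = Set.range pts51 := by
  refine subset_antisymm (fun v hv => ?_) ?_
  · exact mem_range_pts51_of_facet_ineqs v (dotProduct_le_of_mem_L51 hv (by decide))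
      (dotProduct_le_of_mem_L51 hv (by decide)) (dotProduct_le_of_mem_L51 hv (by decide))
      (dotProduct_le_of_mem_L51 hv (by decide))
  · rintro _ ⟨k, rfl⟩
    fin_cases k
    all_goals first | exact zero_mem_L51 | exact vertex_mem_L51 (by simp [pts51])

set_option maxRecDepth 40000 in
lemma normVol_comp_pts51_mem (g : Fin 4 → Fin 5) :
    normVol (pts51 ∘ g) ∈ ({0, 2, 3, 5, 7, 17} : Finset ℕ) := by
  revert g
  decide

lemma diffLat_L51_eq_top : diffLat L51 = ⊤ := by
  have hu : ∀ u ∈ ({u1, u2, u3, u4} : Set (Fin 3 → ℤ)), u ∈ diffLat L51 :=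
    fun u hu => subset_diffLat zero_mem_L51 (vertex_mem_L51 hu)
  refine AddSubgroup.eq_top_of_forall_single_one_mem _ fun i => ?_
  fin_cases i
  · show Pi.single 0 1 ∈ _
    rw [show Pi.single 0 1 = u1 by decide]
    exact hu _ (by simp)
  · show Pi.single 1 1 ∈ _
    rw [show Pi.single 1 1 = u1 + 2 • u2 + u3 + 3 • u4 by decide]
    exact add_mem (add_mem (add_mem (hu _ (by simp)) (nsmul_mem (hu _ (by simp)) 2))
      (hu _ (by simp))) (nsmul_mem (hu _ (by simp)) 3)
  · show Pi.single 2 1 ∈ _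
    rw [show Pi.single 2 1 = u2 by decide]
    exact hu _ (by simp)

theorem stmt15 :
    -- exactly five lattice points: the four vertices and the origin
    L51 = {u1, u2, u3, u4, 0} ∧ L51.ncard = 5 ∧
    -- the four tetrahedra on the origin and three vertices have volumes 2, 3, 5, 7
    normVol ![0, u1, u2, u4] = 2 ∧
    normVol ![0, u2, u3, u4] = 3 ∧
    normVol ![0, u1, u3, u4] = 5 ∧
    normVol ![0, u1, u2, u3] = 7 ∧
    -- E¹_{(5,1)} is lattice-spanning
    (diffLat L51).index = 1 ∧
    -- but contains no unimodular tetrahedron with vertices among its lattice points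
    ¬ ∃ f : Fin 4 → (Fin 3 → ℤ), (∀ i, f i ∈ L51) ∧ normVol f = 1 := by
  refine ⟨?_, ?_, by decide, by decide, by decide, by decide, ?_, ?_⟩
  · rw [L51_eq_range, range_pts51]
  · rw [L51_eq_range, Set.ncard_range_of_injective (by decide), Nat.card_fin]
  · rw [diffLat_L51_eq_top, AddSubgroup.index_top]
  · rintro ⟨f, hf, hvol⟩
    rw [L51_eq_range] at hf
    choose g hg using hf
    have hvol' := normVol_comp_pts51_mem g
    rw [show pts51 ∘ g = f from funext hg, hvol] at hvol'
    exact absurd hvol' (by decide)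
end

section
/- Let P be a lattice 3-polytope of sublattice index q > 1, let P' denote P regarded with respect to the affine lattice Λ' generated by P ∩ Z^3 (so P' has normalized volume V' = V/q where V is the normalized volume of P with respect to Z^3), and let n, n_0 denote the number of lattice points and interior lattice points of P. Then h*_2(P) ≥ (q−1)(1 + h*_1(P)), where h*_1(P) = n − 4 and h*_2(P) = V + 3 − n_0 − n, given that the h*-vector of P' has nonnegative entries summing to V' with h*_0(P') = 1 and h*_1(P') = n − 4. -/
/-- Hibi-type inequality for non-spanning 3-polytopes: if `P` has sublattice
index `q > 1`, normalized volume `V = q·V'` (where `V'` is the volume of `P`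
with respect to the lattice spanned by its lattice points), `n` lattice points
and `n₀` interior lattice points, and `(h₀', h₁', h₂', h₃')` is the `h*`-vector
of `P'` (nonnegative, summing to `V'`, with `h₀' = 1`, `h₁' = n − 4`,
`h₂' = V' + 3 − n₀ − n`), then `h₂*(P) ≥ (q−1)(1 + h₁*(P))`. -/
theorem stmt17 (q V V' n n₀ h₀' h₁' h₂' h₃' : ℤ)
    (hq : 1 < q) (hV : V = q * V')
    (h0 : h₀' = 1) (h1 : h₁' = n - 4) (h2 : h₂' = V' + 3 - n₀ - n)
    (hnn : 0 ≤ h₀' ∧ 0 ≤ h₁' ∧ 0 ≤ h₂' ∧ 0 ≤ h₃')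
    (hsum : h₀' + h₁' + h₂' + h₃' = V') :
    V + 3 - n₀ - n ≥ (q - 1) * (1 + (n - 4)) := by
  nlinarith [mul_nonneg (by linarith : (0:ℤ) ≤ q - 1) (by linarith [hnn.2.2.1, hnn.2.2.2] : (0:ℤ) ≤ h₂' + h₃')]
end
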